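/- If λ ∈ Γ_k^+ and σ_{k+1}(λ) > 0, then Σ_i σ_{k-1}(λ_i)·λ_i² / σ_k(λ) ≥ (k/n)·σ_1(λ), where λ_i inside σ_{k-1} denotes deletion of the i-th coordinate. -/

import Mathlib

/-!
Splitting off the `i`-th coordinate gives `σ_{j+1} = σ_{j+1}(λ|i) + λ_i σ_j(λ|i)`; summing
over `i` yields `∑ i, σ_{k-1}(λ|i) λ_i² = σ_1 σ_k - (k+1) σ_{k+1}`, so it suffices to show
`(k+1) σ_{k+1} ≤ ((n-k)/n) σ_1 σ_k`, i.e. `E_{k+1} ≤ E_1 E_k` for `E_j = σ_j / C(n,j)`.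
Since `∏ (X + λ_i)` is real-rooted, Rolle's theorem gives Newton's inequalities
`E_j E_{j+2} ≤ E_{j+1}²`; as `E_0 = 1` and `E_1, …, E_k > 0`, the ratios `E_{j+1} / E_j`
decrease up to `j = k`, whence `E_{k+1} / E_k ≤ E_1`.
-/

open Finset

noncomputable def esymm (n k : ℕ) (x : Fin n → ℝ) : ℝ :=
  ∑ s ∈ (Finset.univ : Finset (Fin n)).powersetCard k, ∏ i ∈ s, x i

/-- σ_{k}(λ with i-th coordinate deleted) -/
noncomputable def esymmDel (n k : ℕ) (x : Fin n → ℝ) (i : Fin n) : ℝ :=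
  ∑ s ∈ ((Finset.univ : Finset (Fin n)).erase i).powersetCard k, ∏ j ∈ s, x j

def GammaPlus (n k : ℕ) : Set (Fin n → ℝ) :=
  {x | ∀ j : ℕ, 1 ≤ j → j ≤ k → 0 < esymm n j x}

open Polynomial Nat

section ElementarySymmetric

variable {n : ℕ} (x : Fin n → ℝ)

theorem esymm_zero : esymm n 0 x = 1 := by
  simp [esymm]

theorem esymm_one : esymm n 1 x = ∑ i, x i := by
  simp [esymm, powersetCard_one]

theorem esymm_eq_zero_of_lt {j : ℕ} (h : n < j) : esymm n j x = 0 := by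
  rw [esymm, powersetCard_eq_empty.2 (by simpa using h), sum_empty]

theorem esymm_succ_eq_esymmDel (j : ℕ) (i : Fin n) :
    esymm n (j + 1) x = esymmDel n (j + 1) x i + x i * esymmDel n j x i := by
  have hi : i ∉ univ.erase i := notMem_erase i univ
  rw [esymm, ← insert_erase (mem_univ i), powersetCard_succ_insert hi,
    sum_union (disjoint_left.2 fun s hs hs' => ?_), esymmDel, esymmDel, mul_sum,
    sum_image fun s hs t ht hst => ?_]
  · refine congrArg _ (sum_congr rfl fun s hs => ?_)
    rw [prod_insert fun h => hi ((mem_powersetCard.1 hs).1 h)]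
  · rw [← erase_insert fun h => hi ((mem_powersetCard.1 hs).1 h),
      ← erase_insert fun h => hi ((mem_powersetCard.1 ht).1 h), hst]
  · obtain ⟨t, -, rfl⟩ := mem_image.1 hs'
    exact hi ((mem_powersetCard.1 hs).1 (mem_insert_self i t))

theorem sum_esymmDel (j : ℕ) : ∑ i, esymmDel n j x i = (n - j : ℝ) * esymm n j x := by
  have hfilter (i : Fin n) :
      (univ.erase i).powersetCard j = (univ.powersetCard j).filter (i ∉ ·) := by
    ext s
    simp only [mem_powersetCard, mem_filter, subset_erase]
    tauto
  simp_rw [esymmDel, hfilter, sum_filter]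
  rw [sum_comm, esymm, mul_sum]
  refine sum_congr rfl fun s hs => ?_
  obtain ⟨-, rfl⟩ := mem_powersetCard.1 hs
  rw [← sum_filter, sum_const, filter_notMem_eq_sdiff, card_univ_sdiff, Fintype.card_fin,
    nsmul_eq_mul, Nat.cast_sub (card_le_univ s |>.trans_eq (Fintype.card_fin n))]

theorem sum_mul_esymmDel (j : ℕ) :
    ∑ i, x i * esymmDel n j x i = (j + 1 : ℝ) * esymm n (j + 1) x := by
  simp_rw [show ∀ i, x i * esymmDel n j x i = esymm n (j + 1) x - esymmDel n (j + 1) x i from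
    fun i => by rw [esymm_succ_eq_esymmDel x j i]; ring]
  rw [sum_sub_distrib, sum_const, sum_esymmDel, Finset.card_fin, nsmul_eq_mul]
  push_cast
  ring

theorem sum_esymmDel_mul_sq (j : ℕ) :
    ∑ i, esymmDel n j x i * x i ^ 2
      = esymm n 1 x * esymm n (j + 1) x - (j + 2 : ℝ) * esymm n (j + 2) x := by
  simp_rw [show ∀ i, esymmDel n j x i * x i ^ 2
      = x i * esymm n (j + 1) x - x i * esymmDel n (j + 1) x i from
    fun i => by rw [esymm_succ_eq_esymmDel x j i]; ring]
  rw [sum_sub_distrib, ← sum_mul, sum_mul_esymmDel, esymm_one]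
  push_cast
  ring

end ElementarySymmetric

theorem Nat.cast_add_descFactorial {K : Type*} [Field K] [CharZero K] (a b : ℕ) :
    ((a + b).descFactorial b : K) = (a + b)! / a ! := by
  rw [eq_div_iff (Nat.cast_ne_zero.2 a.factorial_ne_zero), mul_comm]
  exact_mod_cast (by simpa using Nat.factorial_mul_descFactorial (Nat.le_add_left b a))

namespace Polynomial

theorem Splits.reverse {K : Type*} [Field K] {f : K[X]} (hf : f.Splits) : f.reverse.Splits := by
  induction hf using Submonoid.closure_induction with
  | mem f hf =>
    rcases hf with ⟨a, rfl⟩ | ⟨a, rfl⟩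
    · simp
    · exact .of_natDegree_le_one ((reverse_natDegree_le _).trans (natDegree_X_add_C a).le)
  | one => rw [← C_1, reverse_C]; exact .C 1
  | mul f g _ _ hf hg => rw [reverse_mul_of_domain]; exact hf.mul hg

theorem Splits.derivative {p : ℝ[X]} (hp : p.Splits) : (Polynomial.derivative p).Splits := by
  rw [splits_iff_card_roots] at hp ⊢
  have := card_roots_le_derivative p
  have := card_roots' (Polynomial.derivative p)
  have := natDegree_derivative_le p
  omega

theorem Splits.iterate_derivative {p : ℝ[X]} (hp : p.Splits) (k : ℕ) :
    (Polynomial.derivative^[k] p).Splits := by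
  induction k with
  | zero => exact hp
  | succ k ih => rw [Function.iterate_succ_apply']; exact ih.derivative

theorem Splits.discrim_nonneg {K : Type*} [Field K] [LinearOrder K] [IsStrictOrderedRing K]
    {p : K[X]} (hp : p.Splits) (hdeg : p.natDegree ≤ 2) :
    0 ≤ discrim (p.coeff 2) (p.coeff 1) (p.coeff 0) := by
  by_cases h2 : p.coeff 2 = 0
  · simpa [discrim, h2] using sq_nonneg (p.coeff 1)
  have hdeg2 : p.degree = 2 := by
    rw [degree_eq_natDegree (by rintro rfl; simp at h2),
      le_antisymm hdeg (le_natDegree_of_ne_zero h2)]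
    rfl
  obtain ⟨z, hz⟩ := hp.exists_eval_eq_zero (by rw [hdeg2]; decide)
  rw [eval_eq_sum_range' (n := 3) (by omega)] at hz
  rw [discrim_eq_sq_of_quadratic_eq_zero (x := z) (by simp [Finset.sum_range_succ] at hz; linarith)]
  exact sq_nonneg _

theorem Splits.factorial_mul_coeff_mul_le {p : ℝ[X]} (hp : p.Splits) {r m : ℕ}
    (hm : p.natDegree = r + 2 + m) :
    (m + 2)! * r ! * m ! * (r + 2)! * (p.coeff r * p.coeff (r + 2))
      ≤ ((m + 1)! * (r + 1)!) ^ 2 * p.coeff (r + 1) ^ 2 := by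
  -- Differentiating `r` times, reversing, and differentiating `m` more times leaves a
  -- real-rooted quadratic whose coefficients are multiples of `p.coeff (r + 2)`,
  -- `p.coeff (r + 1)` and `p.coeff r`.
  set q := Polynomial.derivative^[r] p
  have hq_coeff (i : ℕ) : q.coeff i = ((i + r).descFactorial r : ℝ) * p.coeff (i + r) := by
    simp [q, coeff_iterate_derivative]
  have hq_deg : q.natDegree = m + 2 := by
    refine le_antisymm ?_ (le_natDegree_of_ne_zero ?_)
    · have : q.natDegree ≤ p.natDegree - r := natDegree_iterate_derivative p r
      omega
    · rw [hq_coeff, show m + 2 + r = p.natDegree by omega, ← leadingCoeff]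
      have hp0 : p ≠ 0 := by rintro rfl; rw [natDegree_zero] at hm; omega
      exact mul_ne_zero (by exact_mod_cast (Nat.descFactorial_pos.2 (by omega)).ne')
        (leadingCoeff_ne_zero.2 hp0)
  set s := Polynomial.derivative^[m] q.reverse
  have hs_coeff (i : ℕ) (hi : i ≤ 2) : s.coeff i =
      (i + m).descFactorial m * ((2 - i + r).descFactorial r * p.coeff (2 - i + r)) := by
    rw [coeff_iterate_derivative, coeff_reverse, hq_deg, revAt_le (by omega), hq_coeff,
      nsmul_eq_mul, show m + 2 - (i + m) = 2 - i by omega]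
  have hs_deg : s.natDegree ≤ 2 := by
    have : s.natDegree ≤ q.reverse.natDegree - m := natDegree_iterate_derivative _ m
    have := reverse_natDegree_le q
    omega
  have hdisc := ((hp.iterate_derivative r).reverse.iterate_derivative m).discrim_nonneg hs_deg
  rw [hs_coeff 0 (by norm_num), hs_coeff 1 (by norm_num), hs_coeff 2 (by norm_num),
    discrim] at hdisc
  simp only [Nat.sub_self, Nat.sub_zero, zero_add, Nat.add_one_sub_one] at hdisc
  rw [cast_add_descFactorial 1 m, cast_add_descFactorial 1 r, cast_add_descFactorial 2 m,
    cast_add_descFactorial 2 r, descFactorial_self, descFactorial_self] at hdisc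
  norm_num [add_comm _ m, add_comm _ r] at hdisc
  linear_combination hdisc

theorem Splits.coeff_div_choose_mul_le_sq {p : ℝ[X]} (hp : p.Splits) {r : ℕ}
    (hr : r + 2 ≤ p.natDegree) :
    p.coeff r / p.natDegree.choose r * (p.coeff (r + 2) / p.natDegree.choose (r + 2))
      ≤ (p.coeff (r + 1) / p.natDegree.choose (r + 1)) ^ 2 := by
  obtain ⟨m, hm⟩ : ∃ m, p.natDegree = r + 2 + m := ⟨p.natDegree - (r + 2), by omega⟩
  have hchoose (j : ℕ) (hj : j ≤ 2) :
      (p.natDegree.choose (r + j) : ℝ) = (r + 2 + m)! / ((r + j)! * (m + 2 - j)!) := by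
    rw [Nat.cast_choose ℝ (by omega), hm, show r + 2 + m - (r + j) = m + 2 - j by omega]
  have h0 := hchoose 0 (by norm_num)
  have h1 := hchoose 1 (by norm_num)
  have h2 := hchoose 2 (by norm_num)
  simp only [add_zero, Nat.sub_zero, show m + 2 - 1 = m + 1 by omega, Nat.add_sub_cancel]
    at h0 h1 h2
  rw [h0, h1, h2]
  field_simp
  linear_combination hp.factorial_mul_coeff_mul_le hm

end Polynomial

theorem mul_succ_le_of_logConcave {E : ℕ → ℝ} (hE : ∀ j, E j * E (j + 2) ≤ E (j + 1) ^ 2)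
    {k : ℕ} (hpos : ∀ j ≤ k, 0 < E j) : E 0 * E (k + 1) ≤ E 1 * E k := by
  induction k with
  | zero => rw [mul_comm]
  | succ k ih =>
    have ih := ih fun j hj => hpos j (by omega)
    have h0 := hpos 0 (by omega)
    have hk := hpos k (by omega)
    have hk1 := hpos (k + 1) le_rfl
    refine le_of_mul_le_mul_left ?_ hk
    calc E k * (E 0 * E (k + 2)) = E 0 * (E k * E (k + 2)) := by ring
      _ ≤ E 0 * E (k + 1) ^ 2 := mul_le_mul_of_nonneg_left (hE k) h0.le
      _ = E (k + 1) * (E 0 * E (k + 1)) := by ring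
      _ ≤ E (k + 1) * (E 1 * E k) := mul_le_mul_of_nonneg_left ih hk1.le
      _ = E k * (E 1 * E (k + 1)) := by ring

noncomputable def esymmMean (n j : ℕ) (x : Fin n → ℝ) : ℝ :=
  esymm n j x / n.choose j

section Maclaurin

variable {n : ℕ} (x : Fin n → ℝ)

theorem esymm_eq_choose_mul_esymmMean (j : ℕ) : esymm n j x = n.choose j * esymmMean n j x := by
  rcases le_or_gt j n with h | h
  · rw [esymmMean, mul_div_cancel₀ _ (by exact_mod_cast (Nat.choose_pos h).ne')]
  · rw [esymm_eq_zero_of_lt x h, Nat.choose_eq_zero_of_lt h, Nat.cast_zero, zero_mul]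

theorem coeff_prod_X_add_C {r : ℕ} (hr : r ≤ n) :
    (∏ i, (X + C (x i))).coeff r = esymm n (n - r) x := by
  rw [prod_X_add_C_coeff _ _ (by simpa using hr), Finset.card_fin, esymm]

theorem natDegree_prod_X_add_C : (∏ i, (X + C (x i))).natDegree = n := by
  rw [natDegree_prod_of_monic _ _ fun i _ => monic_X_add_C (x i)]
  simp

theorem esymmMean_mul_le_sq (j : ℕ) :
    esymmMean n j x * esymmMean n (j + 2) x ≤ esymmMean n (j + 1) x ^ 2 := by
  rcases le_or_gt (j + 2) n with h | h
  · obtain ⟨m, rfl⟩ : ∃ m, n = m + 2 + j := ⟨n - (j + 2), by omega⟩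
    have hsplit : (∏ i, (X + C (x i))).Splits := Splits.prod fun i _ => Splits.X_add_C (x i)
    have := hsplit.coeff_div_choose_mul_le_sq (r := m) (by rw [natDegree_prod_X_add_C]; omega)
    rw [natDegree_prod_X_add_C, coeff_prod_X_add_C x (by omega), coeff_prod_X_add_C x (by omega),
      coeff_prod_X_add_C x (by omega), show m + 2 + j - m = j + 2 by omega,
      show m + 2 + j - (m + 2) = j by omega, show m + 2 + j - (m + 1) = j + 1 by omega,
      Nat.choose_symm_of_eq_add (by ring : _ = m + (j + 2)),
      Nat.choose_symm_of_eq_add (by ring : _ = m + 1 + (j + 1)),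
      Nat.choose_symm_of_eq_add (by ring : _ = m + 2 + j)] at this
    simpa only [esymmMean, mul_comm] using this
  · simp only [esymmMean, esymm_eq_zero_of_lt x h, zero_div, mul_zero]
    exact sq_nonneg _

theorem esymmMean_succ_le {k : ℕ} (hkn : k ≤ n) (hx : x ∈ GammaPlus n k) :
    esymmMean n (k + 1) x ≤ esymmMean n 1 x * esymmMean n k x := by
  have := mul_succ_le_of_logConcave (esymmMean_mul_le_sq x) (k := k) fun j hj => ?_
  · simpa [esymmMean, esymm_zero] using this
  · rcases j.eq_zero_or_pos with rfl | hj0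
    · simp [esymmMean, esymm_zero]
    · exact div_pos (hx j hj0 hj) (Nat.cast_pos.2 (Nat.choose_pos (hj.trans hkn)))

theorem succ_mul_esymm_succ_le {k : ℕ} (hkn : k ≤ n) (hx : x ∈ GammaPlus n k) :
    n * ((k + 1) * esymm n (k + 1) x) ≤ (n - k) * (esymm n 1 x * esymm n k x) := by
  have hchoose : (n.choose (k + 1) : ℝ) * (k + 1) = n.choose k * (n - k) := by
    rw [← Nat.cast_sub hkn]
    exact_mod_cast Nat.choose_succ_right_eq n k
  have hnk : (0 : ℝ) ≤ n - k := sub_nonneg.2 (Nat.cast_le.2 hkn)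
  calc (n : ℝ) * ((k + 1) * esymm n (k + 1) x)
        = n * (n.choose k * (n - k)) * esymmMean n (k + 1) x := by
          rw [esymm_eq_choose_mul_esymmMean x (k + 1), ← hchoose]; ring
    _ ≤ n * (n.choose k * (n - k)) * (esymmMean n 1 x * esymmMean n k x) :=
          mul_le_mul_of_nonneg_left (esymmMean_succ_le x hkn hx) (by positivity)
    _ = (n - k) * (esymm n 1 x * esymm n k x) := by
          rw [esymm_eq_choose_mul_esymmMean x 1, esymm_eq_choose_mul_esymmMean x k,
            Nat.choose_one_right]
          ring

end Maclaurin

theorem stmt_10_general (n k : ℕ) (hk : 1 ≤ k) (hkn : k ≤ n) (x : Fin n → ℝ)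
    (hx : x ∈ GammaPlus n k) :
    (∑ i : Fin n, esymmDel n (k - 1) x i * (x i) ^ 2) / esymm n k x
      ≥ ((k : ℝ) / n) * esymm n 1 x := by
  obtain ⟨j, rfl⟩ : ∃ j, k = j + 1 := ⟨k - 1, by omega⟩
  have hσ : 0 < esymm n (j + 1) x := hx (j + 1) hk le_rfl
  have hn : (0 : ℝ) < n := by exact_mod_cast (by omega : 0 < n)
  have hmaclaurin := succ_mul_esymm_succ_le x hkn hx
  rw [Nat.add_sub_cancel, sum_esymmDel_mul_sq, ge_iff_le, le_div_iff₀ hσ, div_mul_eq_mul_div,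
    div_mul_eq_mul_div, div_le_iff₀ hn]
  push_cast at hmaclaurin ⊢
  linear_combination hmaclaurin

theorem stmt_10 (n k : ℕ) (hk : 1 ≤ k) (hkn : k ≤ n) (x : Fin n → ℝ)
    (hx : x ∈ GammaPlus n k) (hk1 : 0 < esymm n (k + 1) x) :
    (∑ i : Fin n, esymmDel n (k - 1) x i * (x i) ^ 2) / esymm n k x
      ≥ ((k : ℝ) / n) * esymm n 1 x :=
  stmt_10_general n k hk hkn x hx
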